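/- Let A be a symmetric trace-free n×n real matrix (n ≥ 2). Then for every unit vector v, |Av|² ≤ (n−1)/n · |A|² (where |A|² is the squared Frobenius norm). Consequently, if Ric = −A² for the second fundamental form A of a minimal hypersurface, then Ric ≥ −(n−1)/n · |A|² g. -/

import Mathlib

open Matrix

/-!
In an orthonormal eigenbasis `b` of `A`, with coordinates `c k = b k ⬝ᵥ v`, we have
`|Av|² = ∑ λₖ² cₖ²`, `|v|² = ∑ cₖ²` and `|A|² = ∑ λₖ²`, so it suffices to bound each `λₖ²`.
Since `∑ λᵢ = tr A = 0`, the other `n - 1` eigenvalues sum to `-λₖ`, and Cauchy–Schwarz gives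
`λₖ² ≤ (n - 1) (|A|² - λₖ²)`, i.e. `λₖ² ≤ (n - 1) / n · |A|²`.
-/

lemma sq_le_of_sum_eq_zero {ι : Type*} [Fintype ι] [DecidableEq ι] {e : ι → ℝ}
    (he : ∑ i, e i = 0) (k : ι) :
    e k ^ 2 ≤ ((Fintype.card ι : ℝ) - 1) / Fintype.card ι * ∑ i, e i ^ 2 := by
  have hpos : 0 < Fintype.card ι := Fintype.card_pos_iff.mpr ⟨k⟩
  set s := Finset.univ.erase k
  have hcard : (s.card : ℝ) = Fintype.card ι - 1 := by
    rw [Finset.card_erase_of_mem (Finset.mem_univ k), Finset.card_univ,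
      Nat.cast_sub hpos, Nat.cast_one]
  have hsum : ∑ i ∈ s, e i = -e k := by
    linarith [Finset.sum_erase_add Finset.univ e (Finset.mem_univ k)]
  have hsum_sq : ∑ i ∈ s, e i ^ 2 = ∑ i, e i ^ 2 - e k ^ 2 := by
    linarith [Finset.sum_erase_add Finset.univ (fun i ↦ e i ^ 2) (Finset.mem_univ k)]
  have hcs : (∑ i ∈ s, e i) ^ 2 ≤ s.card * ∑ i ∈ s, e i ^ 2 := sq_sum_le_card_mul_sum_sq
  rw [hsum, hcard, hsum_sq] at hcs
  rw [div_mul_eq_mul_div, le_div_iff₀ (by exact_mod_cast hpos)]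
  nlinarith

namespace Matrix.IsHermitian

variable {ι : Type*} [Fintype ι] [DecidableEq ι] {A : Matrix ι ι ℝ}

lemma sum_sq_eq_sum_sq_eigenvectorBasis_dotProduct (hA : A.IsHermitian) (v : ι → ℝ) :
    ∑ i, v i ^ 2 = ∑ k, (⇑(hA.eigenvectorBasis k) ⬝ᵥ v) ^ 2 := by
  rw [← EuclideanSpace.real_norm_sq_eq (WithLp.toLp 2 v),
    ← (hA.eigenvectorBasis).sum_sq_inner_right]
  simp [EuclideanSpace.inner_eq_star_dotProduct, dotProduct_comm]

lemma eigenvectorBasis_dotProduct_mulVec (hA : A.IsHermitian) (k : ι) (v : ι → ℝ) :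
    ⇑(hA.eigenvectorBasis k) ⬝ᵥ (A *ᵥ v) =
      hA.eigenvalues k * (⇑(hA.eigenvectorBasis k) ⬝ᵥ v) := by
  have hsymm : Aᵀ = A := (isHermitian_iff_isSymm.mp hA).eq
  rw [dotProduct_mulVec, ← mulVec_transpose, hsymm, hA.mulVec_eigenvectorBasis,
    smul_dotProduct, smul_eq_mul]

lemma sum_mulVec_sq (hA : A.IsHermitian) (v : ι → ℝ) :
    ∑ i, (A *ᵥ v) i ^ 2 = ∑ k, hA.eigenvalues k ^ 2 * (⇑(hA.eigenvectorBasis k) ⬝ᵥ v) ^ 2 := by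
  simp only [hA.sum_sq_eq_sum_sq_eigenvectorBasis_dotProduct (A *ᵥ v),
    hA.eigenvectorBasis_dotProduct_mulVec, mul_pow]

lemma sum_sq_apply_eq_sum_eigenvalues_sq (hA : A.IsHermitian) :
    ∑ i, ∑ j, A i j ^ 2 = ∑ k, hA.eigenvalues k ^ 2 := by
  have hnorm (k : ι) : ∑ j, hA.eigenvectorBasis k j ^ 2 = 1 := by
    rw [← EuclideanSpace.real_norm_sq_eq, hA.eigenvectorBasis.norm_eq_one, one_pow]
  calc ∑ i, ∑ j, A i j ^ 2 = ∑ j, ∑ i, (A *ᵥ Pi.single j 1) i ^ 2 := by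
        rw [Finset.sum_comm]; simp only [mulVec_single_one, col_apply]
    _ = ∑ k, hA.eigenvalues k ^ 2 * ∑ j, hA.eigenvectorBasis k j ^ 2 := by
        simp only [hA.sum_mulVec_sq, dotProduct_single_one, Finset.mul_sum]
        exact Finset.sum_comm
    _ = ∑ k, hA.eigenvalues k ^ 2 := by simp only [hnorm, mul_one]

lemma sum_mulVec_sq_le (hA : A.IsHermitian) {c : ℝ} (hc : ∀ k, hA.eigenvalues k ^ 2 ≤ c)
    (v : ι → ℝ) :
    ∑ i, (A *ᵥ v) i ^ 2 ≤ c * ∑ i, v i ^ 2 := by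
  rw [hA.sum_mulVec_sq, hA.sum_sq_eq_sum_sq_eigenvectorBasis_dotProduct, Finset.mul_sum]
  exact Finset.sum_le_sum fun k _ ↦ mul_le_mul_of_nonneg_right (hc k) (sq_nonneg _)

theorem sum_mulVec_sq_le_of_trace_eq_zero (hA : A.IsHermitian) (htr : A.trace = 0)
    (v : ι → ℝ) :
    ∑ i, (A *ᵥ v) i ^ 2 ≤
      ((Fintype.card ι : ℝ) - 1) / Fintype.card ι * (∑ i, ∑ j, A i j ^ 2) * ∑ i, v i ^ 2 := by
  have hsum : ∑ k, hA.eigenvalues k = 0 := by simpa [hA.trace_eq_sum_eigenvalues] using htr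
  rw [hA.sum_sq_apply_eq_sum_eigenvalues_sq]
  exact hA.sum_mulVec_sq_le (sq_le_of_sum_eq_zero hsum) v

end Matrix.IsHermitian

theorem stmt18_general {n : ℕ} (A : Matrix (Fin n) (Fin n) ℝ)
    (hsymm : A.IsSymm) (htr : A.trace = 0) :
    (∀ v : Fin n → ℝ, ∑ i, v i ^ 2 = 1 →
      ∑ i, (A.mulVec v) i ^ 2 ≤ ((n : ℝ) - 1) / n * ∑ i, ∑ j, A i j ^ 2) ∧
    (∀ v : Fin n → ℝ,
      -(((n : ℝ) - 1) / n * ∑ i, ∑ j, A i j ^ 2) * (∑ i, v i ^ 2)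
        ≤ -∑ i, (A.mulVec v) i ^ 2) := by
  have key := (isHermitian_iff_isSymm.mpr hsymm).sum_mulVec_sq_le_of_trace_eq_zero htr
  simp only [Fintype.card_fin] at key
  refine ⟨fun v hv ↦ ?_, fun v ↦ ?_⟩
  · simpa only [hv, mul_one] using key v
  · linarith [key v]

/-- Algebraic Kato-type inequality for traceless symmetric matrices:
for every unit vector `v`, `|Av|² ≤ (n−1)/n |A|²`; consequently
`Ric = −A²` satisfies `Ric ≥ −(n−1)/n |A|² g`. -/
theorem stmt18 {n : ℕ} (hn : 2 ≤ n) (A : Matrix (Fin n) (Fin n) ℝ)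
    (hsymm : A.IsSymm) (htr : A.trace = 0) :
    (∀ v : Fin n → ℝ, ∑ i, v i ^ 2 = 1 →
      ∑ i, (A.mulVec v) i ^ 2 ≤ ((n : ℝ) - 1) / n * ∑ i, ∑ j, A i j ^ 2) ∧
    (∀ v : Fin n → ℝ,
      -(((n : ℝ) - 1) / n * ∑ i, ∑ j, A i j ^ 2) * (∑ i, v i ^ 2)
        ≤ -∑ i, (A.mulVec v) i ^ 2) :=
  stmt18_general A hsymm htr
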